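/- For all integers n ≥ 3 and all k ≥ n, sin(π/k)·k/π ≥ cos(π/n); moreover for any Euclidean n-gon with smallest interior angle θ₁, one has sin(θ₁/2) ≤ cos(π/n) ≤ sin(π/k)·k/π, so the upper bound sin(θ₁/2) for its k-th Escobar constant is at most the k-th Escobar constant of the disk. -/

import Mathlib

/-!
The smallest angle is at most the average angle `(n - 2)π / n`, so half of it is at most
`π/2 - π/n` and its sine is at most `sin (π/2 - π/n) = cos (π/n)`. For `k ≥ n`, `cos (π/n)` is at
most `cos (π/k)`, which `x cos x ≤ sin x` at `x = π/k` bounds by `sin (π/k) · k / π`.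
-/

open Real

lemma card_mul_iInf_le_sum {ι : Type*} [Fintype ι] [Nonempty ι] (f : ι → ℝ) :
    Fintype.card ι * ⨅ i, f i ≤ ∑ i, f i := by
  simpa using Finset.card_nsmul_le_sum Finset.univ f _
    fun i _ => ciInf_le (Set.finite_range f).bddBelow i

lemma sin_le_cos_of_le_pi_div_two_sub {x y : ℝ} (hx : -(π / 2) ≤ x) (hy : 0 ≤ y)
    (hxy : x ≤ π / 2 - y) : sin x ≤ cos y := by
  rw [← sin_pi_div_two_sub]
  exact sin_le_sin_of_le_of_le_pi_div_two hx (by linarith) hxy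

lemma sin_half_iInf_le_cos_pi_div_card {ι : Type*} [Fintype ι] [Nonempty ι] (θ : ι → ℝ)
    (hθ : ∀ i, 0 ≤ θ i) (hsum : ∑ i, θ i = (Fintype.card ι - 2) * π) :
    sin ((⨅ i, θ i) / 2) ≤ cos (π / Fintype.card ι) := by
  have hcard : (0 : ℝ) < Fintype.card ι := by exact_mod_cast Fintype.card_pos
  have hinf_nonneg : 0 ≤ ⨅ i, θ i := le_ciInf hθ
  have hinf_le_avg : (⨅ i, θ i) ≤ π - 2 * (π / Fintype.card ι) := by
    have hsum_ge := card_mul_iInf_le_sum θ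
    rw [hsum] at hsum_ge
    rw [mul_div_assoc', le_sub_comm, div_le_iff₀ hcard]
    linarith
  exact sin_le_cos_of_le_pi_div_two_sub (by linarith [pi_pos]) (div_pos pi_pos hcard).le
    (by linarith)

lemma mul_cos_le_sin {x : ℝ} (hx₀ : 0 ≤ x) (hx : x ≤ π) : x * cos x ≤ sin x := by
  rcases lt_or_ge x (π / 2) with hx' | hx'
  · have hcos : 0 < cos x := cos_pos_of_mem_Ioo ⟨by linarith [pi_pos], hx'⟩
    calc x * cos x ≤ tan x * cos x := mul_le_mul_of_nonneg_right (le_tan hx₀ hx') hcos.le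
      _ = sin x := tan_mul_cos hcos.ne'
  · have hcos : cos x ≤ 0 := cos_nonpos_of_pi_div_two_le_of_le hx' (by linarith)
    exact (mul_nonpos_of_nonneg_of_nonpos hx₀ hcos).trans (sin_nonneg_of_nonneg_of_le_pi hx₀ hx)

lemma cos_pi_div_le_sin_pi_div_mul_div_pi {n k : ℕ} (hn : 0 < n) (hk : n ≤ k) :
    cos (π / n) ≤ sin (π / k) * k / π := by
  have hn' : (0 : ℝ) < n := by exact_mod_cast hn
  have hk' : (0 : ℝ) < k := by exact_mod_cast hn.trans_le hk
  have hπk : 0 < π / k := div_pos pi_pos hk'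
  have hπk_le_πn : π / k ≤ π / n := div_le_div_of_nonneg_left pi_pos.le hn' (by exact_mod_cast hk)
  have hπn_le : π / n ≤ π := div_le_self pi_pos.le (by exact_mod_cast hn)
  calc cos (π / n) ≤ cos (π / k) :=
        cos_le_cos_of_nonneg_of_le_pi hπk.le hπn_le hπk_le_πn
    _ ≤ sin (π / k) / (π / k) := by
        rw [le_div_iff₀ hπk, mul_comm]
        exact mul_cos_le_sin hπk.le (hπk_le_πn.trans hπn_le)
    _ = sin (π / k) * k / π := by field_simp

theorem ngon_escobar_upper_bound_le_disk_general (n k : ℕ) (hn : 3 ≤ n) (hk : n ≤ k)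
    (θ : Fin n → ℝ) (hpos : ∀ i, 0 < θ i)
    (hsum : ∑ i, θ i = ((n : ℝ) - 2) * π) :
    Real.sin ((⨅ i, θ i) / 2) ≤ Real.cos (π / n) ∧
      Real.cos (π / n) ≤ Real.sin (π / k) * k / π := by
  have : Nonempty (Fin n) := ⟨⟨0, by omega⟩⟩
  refine ⟨?_, cos_pi_div_le_sin_pi_div_mul_div_pi (by omega) hk⟩
  simpa using sin_half_iInf_le_cos_pi_div_card θ (fun i => (hpos i).le) (by simpa using hsum)

theorem ngon_escobar_upper_bound_le_disk (n k : ℕ) (hn : 3 ≤ n) (hk : n ≤ k)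
    (θ : Fin n → ℝ) (hpos : ∀ i, 0 < θ i) (hlt : ∀ i, θ i < 2 * π)
    (hsum : ∑ i, θ i = ((n : ℝ) - 2) * π) :
    Real.sin ((⨅ i, θ i) / 2) ≤ Real.cos (π / n) ∧
      Real.cos (π / n) ≤ Real.sin (π / k) * k / π :=
  ngon_escobar_upper_bound_le_disk_general n k hn hk θ hpos hsum
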